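/- A square-free positive integer m is a congruent number if and only if E(ℚ(√m))⁻ is strictly larger than E[2]. -/

import Mathlib

open WeierstrassCurve WeierstrassCurve.Affine

/-- A positive integer `n` is a *congruent number* if it is the area of a right triangle
with rational side lengths. -/
def IsCongruentNumber (n : ℕ) : Prop :=
  ∃ a b c : ℚ, 0 < a ∧ 0 < b ∧ 0 < c ∧ a ^ 2 + b ^ 2 = c ^ 2 ∧ a * b / 2 = n

/-- The elliptic curve `E : y² = x³ − x` over `ℚ`. -/
def E : WeierstrassCurve.Affine ℚ := ⟨0, 0, 0, -1, 0⟩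

open Classical in
/-- The subgroup `E(K)⁻` of points of `E` over `K` sent to their negatives by `σ`. -/
noncomputable def minusSubgroup (K : Type) [Field K] [Algebra ℚ K] (σ : K ≃ₐ[ℚ] K) :
    AddSubgroup (E.baseChange K).Point :=
  (Affine.Point.map (W' := E) σ.toAlgHom + AddMonoidHom.id (E.baseChange K).Point).ker

/-! A rational right triangle of area `m` is the same thing as a rational point with `y ≠ 0` on
`E_m : y² = x³ − m²x`, and `(x, y) ↦ (x / m, y / m² · √m)` identifies such points with the points
of `E(ℚ(√m))` of the form `(a, d√m)`, `a, d ∈ ℚ`, `d ≠ 0`. Since `σ` fixes `ℚ` and negates `√m`,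
these are exactly the points `P` of `E(ℚ(√m))` with `σ P = -P` that are not `2`-torsion: a point
`(x, y)` is `2`-torsion iff `y = 0`, and `σ (x, y) = (x, -y)` forces `x ∈ ℚ` and `y ∈ ℚ √m`. -/

theorem exists_point_of_isCongruentNumber {m : ℕ} (h : IsCongruentNumber m) :
    ∃ X Y : ℚ, Y ≠ 0 ∧ Y ^ 2 = X ^ 3 - (m : ℚ) ^ 2 * X := by
  obtain ⟨a, b, c, ha, hb, hc, hpyth, harea⟩ := h
  rw [← harea]
  refine ⟨a * b / 2 * (a + c) / b, 2 * (a * b / 2) ^ 2 * (a + c) / b ^ 2, by positivity, ?_⟩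
  field_simp
  linear_combination hpyth

theorem isCongruentNumber_of_point {m : ℕ} (hm : 0 < m) {X Y : ℚ} (hY : Y ≠ 0)
    (hXY : Y ^ 2 = X ^ 3 - (m : ℚ) ^ 2 * X) : IsCongruentNumber m := by
  have hmQ : (0 : ℚ) < m := by exact_mod_cast hm
  have hY' : 0 < |Y| := abs_pos.mpr hY
  set a : ℚ := (X ^ 2 - m ^ 2) / |Y|
  set b : ℚ := 2 * m * X / |Y|
  have hab : a * b = 2 * m := by
    rw [div_mul_div_comm, ← sq, sq_abs, div_eq_iff (by positivity)]
    linear_combination -2 * (m : ℚ) * hXY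
  have ha : a ≠ 0 := by rintro h; rw [h, zero_mul] at hab; linarith
  have hb : b ≠ 0 := by rintro h; rw [h, mul_zero] at hab; linarith
  refine ⟨|a|, |b|, (X ^ 2 + m ^ 2) / |Y|, abs_pos.mpr ha, abs_pos.mpr hb, by positivity, ?_, ?_⟩
  · rw [sq_abs, sq_abs, div_pow, div_pow, div_pow, ← add_div]
    ring
  · rw [← abs_mul, hab, abs_of_pos (by positivity)]
    ring

theorem isCongruentNumber_iff_exists_twist_point {m : ℕ} (hm : 0 < m) :
    IsCongruentNumber m ↔ ∃ a d : ℚ, d ≠ 0 ∧ m * d ^ 2 = a ^ 3 - a := by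
  have hmQ : (m : ℚ) ≠ 0 := by exact_mod_cast hm.ne'
  constructor
  · rintro h
    obtain ⟨X, Y, hY, hXY⟩ := exists_point_of_isCongruentNumber h
    refine ⟨X / m, Y / m ^ 2, by positivity, ?_⟩
    field_simp
    linear_combination hXY
  · rintro ⟨a, d, hd, had⟩
    refine isCongruentNumber_of_point hm (X := m * a) (Y := m ^ 2 * d) (by positivity) ?_
    linear_combination (m : ℚ) ^ 3 * had

theorem exists_eq_algebraMap_add_algebraMap_mul {R A : Type*} [CommRing R] [CommRing A]
    [Algebra R A] {s : A} {q : R} (hs : s ^ 2 = algebraMap R A q)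
    (hA : Algebra.adjoin R {s} = ⊤) (t : A) :
    ∃ a b : R, t = algebraMap R A a + algebraMap R A b * s := by
  have ht : t ∈ Algebra.adjoin R {s} := hA ▸ Algebra.mem_top
  induction ht using Algebra.adjoin_induction with
  | mem x hx => exact ⟨0, 1, by simp [Set.mem_singleton_iff.mp hx]⟩
  | algebraMap r => exact ⟨r, 0, by simp⟩
  | add x y _ _ hx hy =>
    obtain ⟨⟨a, b, rfl⟩, ⟨c, d, rfl⟩⟩ := And.intro hx hy
    exact ⟨a + c, b + d, by simp only [map_add]; ring⟩
  | mul x y _ _ hx hy =>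
    obtain ⟨⟨a, b, rfl⟩, ⟨c, d, rfl⟩⟩ := And.intro hx hy
    refine ⟨a * c + b * d * q, a * d + b * c, ?_⟩
    simp only [map_add, map_mul]
    linear_combination (algebraMap R A b * algebraMap R A d) * hs

section QuadraticExtension

variable {F K : Type*} [Field F] [Field K] [Algebra F K] [NeZero (2 : K)] {s : K} {q : F}
  (hs : s ^ 2 = algebraMap F K q) (hK : Algebra.adjoin F {s} = ⊤) {σ : K ≃ₐ[F] K} (hσ : σ s = -s)
include hs hK hσ

theorem exists_algebraMap_eq_of_map_eq_self {t : K} (ht : σ t = t) :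
    ∃ a : F, algebraMap F K a = t := by
  obtain ⟨a, b, rfl⟩ := exists_eq_algebraMap_add_algebraMap_mul hs hK t
  simp only [map_add, map_mul, AlgEquiv.commutes, hσ] at ht
  have hbs : algebraMap F K b * s = 0 :=
    (mul_eq_zero.mp (by linear_combination -ht : (2 : K) * (algebraMap F K b * s) = 0)).resolve_left
      two_ne_zero
  exact ⟨a, by rw [hbs, add_zero]⟩

theorem exists_algebraMap_mul_eq_of_map_eq_neg {t : K} (ht : σ t = -t) :
    ∃ b : F, algebraMap F K b * s = t := by
  obtain ⟨a, b, rfl⟩ := exists_eq_algebraMap_add_algebraMap_mul hs hK t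
  simp only [map_add, map_mul, AlgEquiv.commutes, hσ] at ht
  have ha : algebraMap F K a = 0 :=
    (mul_eq_zero.mp (by linear_combination ht : (2 : K) * algebraMap F K a = 0)).resolve_left
      two_ne_zero
  exact ⟨b, by rw [ha, zero_add]⟩

end QuadraticExtension

local instance {K : Type*} [Ring K] [Nontrivial K] [Algebra ℚ K] : CharZero K :=
  charZero_of_injective_algebraMap (algebraMap ℚ K).injective

section BaseChange

variable {K : Type} [Field K] [Algebra ℚ K] {x y : K}

theorem baseChange_E_equation_iff :
    (E.baseChange K).toAffine.Equation x y ↔ y ^ 2 = x ^ 3 - x := by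
  rw [equation_iff]
  simp [E, WeierstrassCurve.baseChange, WeierstrassCurve.map, sub_eq_add_neg]

theorem baseChange_E_negY : (E.baseChange K).toAffine.negY x y = -y := by
  simp [E, WeierstrassCurve.baseChange, WeierstrassCurve.map]

theorem baseChange_E_y_eq_negY_iff : y = (E.baseChange K).toAffine.negY x y ↔ y = 0 := by
  rw [baseChange_E_negY, eq_neg_iff_add_eq_zero, ← two_mul, mul_eq_zero]
  simp

theorem baseChange_E_nonsingular (h : y ^ 2 = x ^ 3 - x) (hy : y ≠ 0) :
    (E.baseChange K).toAffine.Nonsingular x y := by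
  rw [nonsingular_iff]
  exact ⟨baseChange_E_equation_iff.mpr h, Or.inr (mt baseChange_E_y_eq_negY_iff.mp hy)⟩

theorem baseChange_E_two_smul_some_eq_zero_iff [DecidableEq K]
    (h : (E.baseChange K).toAffine.Nonsingular x y) : 2 • Point.some x y h = 0 ↔ y = 0 := by
  rw [two_smul, ← baseChange_E_y_eq_negY_iff]
  refine ⟨fun h2 => ?_, Point.add_self_of_Y_eq⟩
  by_contra hne
  exact Point.some_ne_zero _ (Point.add_self_of_Y_ne hne ▸ h2)

open Classical in
theorem some_mem_minusSubgroup_iff {σ : K ≃ₐ[ℚ] K}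
    (h : (E.baseChange K).toAffine.Nonsingular x y) :
    Point.some x y h ∈ minusSubgroup K σ ↔ σ x = x ∧ σ y = -y := by
  rw [minusSubgroup, AddMonoidHom.mem_ker, AddMonoidHom.add_apply, AddMonoidHom.id_apply,
    add_eq_zero_iff_eq_neg, Point.map_some, Point.neg_some, Point.some.injEq, baseChange_E_negY]
  rfl

end BaseChange

section MinusPart

open Classical

variable {K : Type} [Field K] [Algebra ℚ K] {s : K} {q : ℚ} (hs : s ^ 2 = algebraMap ℚ K q)
  {σ : K ≃ₐ[ℚ] K} (hσ : σ s = -s)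
include hs hσ

theorem exists_mem_minusSubgroup_of_twist_point (hq : q ≠ 0) {a d : ℚ} (hd : d ≠ 0)
    (had : q * d ^ 2 = a ^ 3 - a) : ∃ P ∈ minusSubgroup K σ, ¬2 • P = 0 := by
  have hs0 : s ≠ 0 := by
    rintro rfl
    rw [zero_pow two_ne_zero, eq_comm, map_eq_zero] at hs
    exact hq hs
  have hy : algebraMap ℚ K d * s ≠ 0 := by simp [hd, hs0]
  have h : (algebraMap ℚ K d * s) ^ 2 = algebraMap ℚ K a ^ 3 - algebraMap ℚ K a := by
    rw [mul_pow, hs, ← map_pow, ← map_mul, mul_comm, had, map_sub, map_pow]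
  refine ⟨.some _ _ (baseChange_E_nonsingular h hy), ?_, ?_⟩
  · rw [some_mem_minusSubgroup_iff]
    simp [hσ]
  · rwa [baseChange_E_two_smul_some_eq_zero_iff]

theorem exists_twist_point_of_mem_minusSubgroup (hK : Algebra.adjoin ℚ {s} = ⊤)
    {P : (E.baseChange K).Point} (hP : P ∈ minusSubgroup K σ) (h2 : ¬2 • P = 0) :
    ∃ a d : ℚ, d ≠ 0 ∧ q * d ^ 2 = a ^ 3 - a := by
  rcases P with _ | ⟨x, y, h⟩
  · exact absurd (smul_zero 2) h2
  rw [some_mem_minusSubgroup_iff] at hP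
  rw [baseChange_E_two_smul_some_eq_zero_iff] at h2
  obtain ⟨a, rfl⟩ := exists_algebraMap_eq_of_map_eq_self hs hK hσ hP.1
  obtain ⟨d, rfl⟩ := exists_algebraMap_mul_eq_of_map_eq_neg hs hK hσ hP.2
  refine ⟨a, d, by rintro rfl; simp at h2, (algebraMap ℚ K).injective ?_⟩
  have := baseChange_E_equation_iff.mp h.1
  simp only [map_mul, map_sub, map_pow] at this ⊢
  linear_combination this - algebraMap ℚ K d ^ 2 * hs

end MinusPart

open Classical in
theorem congruent_iff_minus_part_gt_two_torsion_general (m : ℕ) (hm0 : 0 < m)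
    (K : Type) [Field K] [Algebra ℚ K]
    (sm : K) (hsm : sm ^ 2 = (m : K)) (hK : Algebra.adjoin ℚ {sm} = ⊤)
    (σ : K ≃ₐ[ℚ] K) (hσ : σ sm = -sm) :
    IsCongruentNumber m ↔ ∃ P ∈ minusSubgroup K σ, ¬2 • P = 0 := by
  rw [← map_natCast (algebraMap ℚ K)] at hsm
  rw [isCongruentNumber_iff_exists_twist_point hm0]
  constructor
  · rintro ⟨a, d, hd, had⟩
    exact exists_mem_minusSubgroup_of_twist_point hsm hσ (Nat.cast_ne_zero.mpr hm0.ne') hd had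
  · rintro ⟨P, hP, h2⟩
    exact exists_twist_point_of_mem_minusSubgroup hsm hσ hK hP h2

open Classical in
/-- a square-free positive integer `m` is congruent iff `E(ℚ(√m))⁻` is
strictly larger than `E[2]`, i.e. contains a point not killed by `2`. -/
theorem congruent_iff_minus_part_gt_two_torsion (m : ℕ) (hm0 : 0 < m) (hm : Squarefree m)
    (K : Type) [Field K] [Algebra ℚ K]
    (sm : K) (hsm : sm ^ 2 = (m : K)) (hK : Algebra.adjoin ℚ {sm} = ⊤)
    (σ : K ≃ₐ[ℚ] K) (hσ : σ sm = -sm) :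
    IsCongruentNumber m ↔ ∃ P ∈ minusSubgroup K σ, ¬2 • P = 0 :=
  congruent_iff_minus_part_gt_two_torsion_general m hm0 K sm hsm hK σ hσ
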